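/- Let $c \in \mathbb{R}$ and set $r_1(u,v) = -(c+\tfrac{1}{2})u^2 + v$ and $r_2(u,v) = -(c+1)u^2 + v$. Let $A(u,v)$ be the Jacobian of the flux $\Phi(u,v) = \big(v - 2(c+\tfrac{3}{4})u^2,\; -\tfrac{4}{3}(c+\tfrac{1}{2})(c+1)u^3\big)$. Then the gradient $\nabla r_1 = (-(2c+1)u, 1)$ is a left eigenvector of $A(u,v)$ with eigenvalue $-(2c+1)u$, and $\nabla r_2 = (-2(c+1)u, 1)$ is a left eigenvector of $A(u,v)$ with eigenvalue $-2(c+1)u$, at every point $(u,v)$. -/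

import Mathlib

/-!
The Jacobian of the flux is the companion matrix `!![a, 1; b, 0]` of
`λ² - aλ - b` with `a = -4(c+3/4)u`, `b = -4(c+1/2)(c+1)u²`, and `(x, 1)` is a left
eigenvector of such a matrix, with eigenvalue `x`, for every root `x`. The two roots are
`-(2c+1)u` and `-2(c+1)u`: their sum is `a` and their product is `-b`.
-/

/-- Partial derivative of a function of two real variables. -/
noncomputable def pd (j : Fin 2) (f : ℝ → ℝ → ℝ) : ℝ → ℝ → ℝ :=
  fun u v => if j = 0 then deriv (fun u' => f u' v) u else deriv (fun v' => f u v') v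

/-- Jacobian matrix of a map `Φ : ℝ² → ℝ²`. -/
noncomputable def jac (Φ : Fin 2 → ℝ → ℝ → ℝ) (u v : ℝ) : Matrix (Fin 2) (Fin 2) ℝ :=
  Matrix.of fun i j => pd j (Φ i) u v

/-- The flux of the `B₂` primary flow. -/
noncomputable def fluxB2 (c : ℝ) : Fin 2 → ℝ → ℝ → ℝ :=
  fun i => if i = 0 then (fun u v => v - 2 * (c + 3/4) * u ^ 2)
           else (fun u v => -(4/3) * (c + 1/2) * (c + 1) * u ^ 3)

theorem Matrix.vecMul_companion_eq_smul {R : Type*} [CommRing R] {a b x : R}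
    (hx : x ^ 2 = a * x + b) :
    vecMul ![x, 1] !![a, 1; b, 0] = x • ![x, 1] := by
  ext j
  fin_cases j
  · simp only [vecMul, dotProduct, Fin.sum_univ_two, of_apply, cons_val', cons_val_zero,
      cons_val_one, cons_val_fin_one, Fin.zero_eta, Fin.isValue, one_mul, Pi.smul_apply,
      smul_eq_mul]
    linear_combination -hx
  · simp [vecMul, dotProduct, Fin.sum_univ_two]

theorem jac_fluxB2 (c u v : ℝ) :
    jac (fluxB2 c) u v =
      !![-(4 * (c + 3/4) * u), 1; -4 * (c + 1/2) * (c + 1) * u ^ 2, 0] := by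
  ext i j
  fin_cases i <;> fin_cases j <;> simp [jac, pd, fluxB2] <;> ring

/-- The gradients of the Riemann invariants `r₁ = -(c+1/2)u² + v` and
`r₂ = -(c+1)u² + v` are left eigenvectors of the Jacobian of the `B₂`
primary flux, with eigenvalues `-(2c+1)u` and `-2(c+1)u` respectively. -/
theorem stmt6 (c u v : ℝ) :
    Matrix.vecMul ![-(2 * c + 1) * u, 1] (jac (fluxB2 c) u v)
      = (-(2 * c + 1) * u) • ![-(2 * c + 1) * u, 1] ∧
    Matrix.vecMul ![-2 * (c + 1) * u, 1] (jac (fluxB2 c) u v)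
      = (-2 * (c + 1) * u) • ![-2 * (c + 1) * u, 1] := by
  rw [jac_fluxB2]
  constructor <;> apply Matrix.vecMul_companion_eq_smul <;> ring
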